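/- The discriminant group of the Kummer lattice Π is isomorphic to (Z/2)^6, with representatives given by the classes of (1/2)Σ_{a ∈ P_{ij}} E_a for the six coordinate planes P_{ij} ⊂ F_2^4, and the discriminant quadratic form with respect to these generators is minus three hyperbolic blocks [[0,1/2],[1/2,0]]. -/

import Mathlib

open Submodule

/-- The index set `𝔽₂⁴` of the 16 two-torsion points / exceptional divisors. -/
abbrev F16 := Fin 4 → ZMod 2

/-- The ambient 16-dimensional rational quadratic space containing the Kummer lattice. -/
abbrev VK := F16 → ℚ

/-- The (negative definite) bilinear form on `VK`, with Gram matrix `diag(-2,…,-2)` on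
the standard basis. -/
def BK : VK →ₗ[ℚ] VK →ₗ[ℚ] ℚ :=
  LinearMap.mk₂ ℚ (fun u v => -2 * ∑ a, u a * v a)
    (fun u u' v => by simp [add_mul, Finset.sum_add_distrib]; try ring)
    (fun c u v => by
      simp only [Pi.smul_apply, smul_eq_mul, Finset.mul_sum, neg_mul]
      exact Finset.sum_congr rfl fun x _ => by ring)
    (fun u v v' => by simp [mul_add, Finset.sum_add_distrib]; try ring)
    (fun c u v => by
      simp only [Pi.smul_apply, smul_eq_mul, Finset.mul_sum, neg_mul]
      exact Finset.sum_congr rfl fun x _ => by ring)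

/-- The classes `E_a`, `a ∈ 𝔽₂⁴`, of the exceptional divisors: the standard basis
vectors, of norm `-2`. -/
def EK (a : F16) : VK := fun b => if b = a then 1 else 0

/-- A subset of `𝔽₂⁴` is an affine hyperplane if it is the solution set of a
non-trivial affine-linear equation. -/
def IsAffineHyperplane (H : Finset F16) : Prop :=
  ∃ (φ : F16 →ₗ[ZMod 2] ZMod 2) (c : ZMod 2), φ ≠ 0 ∧ ∀ a, a ∈ H ↔ φ a = c

/-- The half sum `(1/2) Σ_{a ∈ H} E_a` of the exceptional classes over a subset
`H ⊆ 𝔽₂⁴`. -/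
def halfSum (H : Finset F16) : VK := (2 : ℚ)⁻¹ • ∑ a ∈ H, EK a

/-- The Kummer lattice `Π`, spanned by the `E_a` together with the half sums over all
affine hyperplanes of `𝔽₂⁴`. -/
def KummerLat : Submodule ℤ VK :=
  span ℤ (Set.range EK ∪ { v | ∃ H : Finset F16, IsAffineHyperplane H ∧ v = halfSum H })

/-- The dual lattice `L* = {v ∈ span_ℚ L : B(v, L) ⊆ ℤ}` of a lattice `L` inside a
rational quadratic space. -/
def dualLat {V : Type*} [AddCommGroup V] [Module ℚ V]
    (B : V →ₗ[ℚ] V →ₗ[ℚ] ℚ) (L : Submodule ℤ V) : Submodule ℤ V where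
  carrier := { v | v ∈ span ℚ (L : Set V) ∧ ∀ w ∈ L, ∃ k : ℤ, B v w = k }
  add_mem' := by
    rintro a b ⟨haS, ha⟩ ⟨hbS, hb⟩
    refine ⟨add_mem haS hbS, fun w hw => ?_⟩
    obtain ⟨k, hk⟩ := ha w hw
    obtain ⟨l, hl⟩ := hb w hw
    exact ⟨k + l, by simp [hk, hl]⟩
  zero_mem' := ⟨zero_mem _, fun w _ => ⟨0, by simp⟩⟩
  smul_mem' := by
    rintro c v ⟨hvS, hv⟩
    refine ⟨zsmul_mem hvS c, fun w hw => ?_⟩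
    obtain ⟨k, hk⟩ := hv w hw
    refine ⟨c * k, ?_⟩
    have : B (c • v) = c • B v := map_zsmul B c v
    rw [this]
    simp [hk, mul_comm]

/-- The discriminant group `L*/L` of a lattice `L`. -/
abbrev Disc {V : Type*} [AddCommGroup V] [Module ℚ V]
    (B : V →ₗ[ℚ] V →ₗ[ℚ] ℚ) (L : Submodule ℤ V) :=
  dualLat B L ⧸ (Submodule.comap (dualLat B L).subtype L)

/-- The coordinate plane `P_{ij} = {a ∈ 𝔽₂⁴ : a_k = 0 for k ≠ i, j}`. -/
def Pplane (i j : Fin 4) : Finset F16 :=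
  Finset.univ.filter fun a => ∀ k, k ≠ i → k ≠ j → a k = 0

/-- The six index pairs `12, 34, 13, 24, 14, 23` (zero-based). -/
def pairIdx : Fin 6 → Fin 4 × Fin 4 := ![(0,1), (2,3), (0,2), (1,3), (0,3), (1,2)]

/-- The representatives `p_{ij} = (1/2) Σ_{a ∈ P_{ij}} E_a` of the generators of the
discriminant group of the Kummer lattice, in the order `12, 34, 13, 24, 14, 23`. -/
def pvec (s : Fin 6) : VK := halfSum (Pplane (pairIdx s).1 (pairIdx s).2)

/-- Minus three hyperbolic blocks `[[0,1/2],[1/2,0]]`: the Gram matrix of the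
discriminant form of the Kummer lattice on the generators `p_{ij}`. -/
def discGram : Matrix (Fin 6) (Fin 6) ℚ :=
  ![![0, -1/2, 0, 0, 0, 0], ![-1/2, 0, 0, 0, 0, 0],
    ![0, 0, 0, -1/2, 0, 0], ![0, 0, -1/2, 0, 0, 0],
    ![0, 0, 0, 0, 0, -1/2], ![0, 0, 0, 0, -1/2, 0]]

/-!
Vectors of `Π*` have half-integral coordinates, so reducing `2v` mod 2 maps `Π*` to functions
`𝔽₂⁴ → 𝔽₂` whose sums over all affine hyperplanes vanish, and `Π` is the preimage of the affine
functions: `φ + c` is the indicator of the level set `{φ + c = 1}`, whose half sum lies in `Π`.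

A function `w` whose sums over the coordinate hyperplanes and the six planes `P_ij` vanish is
affine. Subtract the affine function agreeing with `w` at `0` and at the unit vectors; the
difference then sums to zero over every coordinate subcube `{a : supp a ⊆ supp b}` (these are
`0`, the edges at `0`, the planes `P_ij`, the hyperplanes `a_m = 0` and the whole space), and
this unitriangular system forces it to vanish.

Hence the sums over the `P_ij` identify `Π*/Π` with `(ℤ/2)⁶`. The `p_s` form the dual basis for
the sums over the complementary planes, since `|P_s ∩ P_t|` is `4`, `1` or `2` according as
`t = s`, `P_t` is complementary to `P_s`, or neither; the same numbers give the Gram matrix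
`B(p_s, p_t) = -|P_s ∩ P_t| / 2`.
-/

open Finset

section DualLattice

variable {V : Type*} [AddCommGroup V] [Module ℚ V] (B : V →ₗ[ℚ] V →ₗ[ℚ] ℚ)

theorem mem_dualLat_span_iff {S : Set V} {v : V} :
    v ∈ dualLat B (span ℤ S) ↔ v ∈ span ℚ S ∧ ∀ w ∈ S, ∃ k : ℤ, B v w = k := by
  refine ⟨fun hv => ⟨span_span_of_tower ℤ ℚ S ▸ hv.1, fun w hw => hv.2 w (subset_span hw)⟩, ?_⟩
  rintro ⟨hvS, hS⟩
  refine ⟨(span_span_of_tower ℤ ℚ S).symm ▸ hvS, fun w hw => ?_⟩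
  induction hw using Submodule.span_induction with
  | mem w hw => exact hS w hw
  | zero => exact ⟨0, by simp⟩
  | add x y _ _ hx hy =>
    obtain ⟨k, hk⟩ := hx
    obtain ⟨l, hl⟩ := hy
    exact ⟨k + l, by simp [hk, hl]⟩
  | smul n x _ hx =>
    obtain ⟨k, hk⟩ := hx
    exact ⟨n * k, by simp [hk]⟩

theorem intCast_num_of_mem_dualLat {L : Submodule ℤ V} {v w : V} (hv : v ∈ dualLat B L)
    (hw : w ∈ L) : ((B v w).num : ℚ) = B v w := by
  obtain ⟨k, hk⟩ := hv.2 w hw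
  rw [hk, Rat.num_intCast]

def dualPairing (L : Submodule ℤ V) {w : V} (hw : w ∈ L) : dualLat B L →ₗ[ℤ] ℤ where
  toFun v := (B v w).num
  map_add' v v' := Int.cast_injective (α := ℚ) <| by
    rw [Int.cast_add, intCast_num_of_mem_dualLat B (v + v').2 hw,
      intCast_num_of_mem_dualLat B v.2 hw, intCast_num_of_mem_dualLat B v'.2 hw]
    simp
  map_smul' n v := Int.cast_injective (α := ℚ) <| by
    rw [intCast_num_of_mem_dualLat B (n • v).2 hw, eq_intCast, Int.cast_id, smul_eq_mul,
      Int.cast_mul, intCast_num_of_mem_dualLat B v.2 hw]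
    simp

theorem intCast_dualPairing (L : Submodule ℤ V) {w : V} (hw : w ∈ L) (v : dualLat B L) :
    (dualPairing B L hw v : ℚ) = B v w :=
  intCast_num_of_mem_dualLat B v.2 hw

end DualLattice

theorem BK_apply (u v : VK) : BK u v = -2 * ∑ a, u a * v a := rfl

theorem BK_comm (u v : VK) : BK u v = BK v u := by
  simp only [BK_apply, mul_comm]

theorem EK_eq_single (a : F16) : EK a = Pi.single a 1 := by
  ext b
  simp [EK, Pi.single_apply]

theorem BK_EK (v : VK) (a : F16) : BK v (EK a) = -2 * v a := by
  simp [BK_apply, EK_eq_single, Pi.single_apply]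

theorem halfSum_apply (H : Finset F16) (b : F16) :
    halfSum H b = if b ∈ H then 2⁻¹ else 0 := by
  simp [halfSum, EK_eq_single, Finset.sum_apply, Pi.single_apply]

theorem two_mul_halfSum_apply (H : Finset F16) (a : F16) :
    2 * halfSum H a = if a ∈ H then 1 else 0 := by
  rw [halfSum_apply]
  split_ifs <;> norm_num

theorem sum_halfSum (S T : Finset F16) : ∑ a ∈ S, halfSum T a = #(S ∩ T) / 2 := by
  simp [halfSum_apply, div_eq_mul_inv]

theorem BK_halfSum (v : VK) (H : Finset F16) : BK v (halfSum H) = -∑ a ∈ H, v a := by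
  simp [BK_apply, halfSum_apply, ← Finset.sum_mul]
  ring

theorem EK_mem (a : F16) : EK a ∈ KummerLat := subset_span (Or.inl ⟨a, rfl⟩)

theorem halfSum_mem {H : Finset F16} (hH : IsAffineHyperplane H) : halfSum H ∈ KummerLat :=
  subset_span (Or.inr ⟨H, hH, rfl⟩)

theorem mem_KummerLat_of_forall_int {v : VK} (h : ∀ a, ∃ k : ℤ, v a = k) : v ∈ KummerLat := by
  choose k hk using h
  have hv : v = ∑ a, k a • EK a := by
    ext b
    simp [EK_eq_single, Finset.sum_apply, Pi.single_apply, hk]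
  rw [hv]
  exact sum_mem fun a _ => zsmul_mem (EK_mem a) _

theorem exists_neg_eq_intCast_iff (q : ℚ) : (∃ k : ℤ, -q = k) ↔ ∃ k : ℤ, q = k :=
  ⟨fun ⟨k, hk⟩ => ⟨-k, by push_cast; linarith⟩, fun ⟨k, hk⟩ => ⟨-k, by push_cast; linarith⟩⟩

theorem mem_dualLat_KummerLat_iff {v : VK} :
    v ∈ dualLat BK KummerLat ↔ (∀ a, ∃ k : ℤ, 2 * v a = k) ∧
      ∀ H, IsAffineHyperplane H → ∃ k : ℤ, ∑ a ∈ H, v a = k := by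
  have hspan : v ∈ span ℚ (Set.range EK ∪
      { v | ∃ H : Finset F16, IsAffineHyperplane H ∧ v = halfSum H }) := by
    refine span_mono Set.subset_union_left ?_
    rw [show EK = Pi.basisFun ℚ F16 by ext a; simp [EK_eq_single], Module.Basis.span_eq]
    trivial
  simp only [KummerLat, mem_dualLat_span_iff, hspan, true_and, Set.mem_union, Set.mem_range,
    Set.mem_ofPred_eq, or_imp, forall_and, forall_exists_index, forall_apply_eq_imp_iff, and_imp,
    BK_EK, neg_mul, exists_neg_eq_intCast_iff]
  refine and_congr_right' ⟨fun h H hH => ?_, fun h _ H hH hv => hv ▸ ?_⟩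
  · simpa [BK_halfSum, exists_neg_eq_intCast_iff] using h _ H hH rfl
  · simpa [BK_halfSum, exists_neg_eq_intCast_iff] using h H hH

theorem eq_zero_of_forall_sum_eq_zero {α M : Type*} [DecidableEq α] [AddCommGroup M]
    (r : α → ℕ) (D : α → Finset α) (hD : ∀ b, b ∈ D b)
    (hr : ∀ b, ∀ a ∈ D b, a ≠ b → r a < r b) {f : α → M} (hf : ∀ b, ∑ a ∈ D b, f a = 0)
    (b : α) : f b = 0 := by
  induction b using (measure r).wf.induction with
  | _ b ih =>
    have h := hf b
    rwa [← add_sum_erase _ _ (hD b), sum_eq_zero fun a ha =>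
      ih a (hr b a (mem_of_mem_erase ha) (ne_of_mem_erase ha)), add_zero] at h

theorem sum_linear_add_const_eq_zero {W : Type*} [AddCommGroup W] [Module (ZMod 2) W]
    {D : Finset W} (hsum : ∑ a ∈ D, a = 0) (hcard : Even #D) (φ : W →ₗ[ZMod 2] ZMod 2)
    (c : ZMod 2) : ∑ a ∈ D, (φ a + c) = 0 := by
  rw [sum_add_distrib, ← map_sum, hsum, map_zero, sum_const, nsmul_eq_mul,
    ZMod.natCast_eq_zero_iff_even.2 hcard, zero_mul, zero_add]

def plane (s : Fin 6) : Finset F16 := Pplane (pairIdx s).1 (pairIdx s).2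

-- `plane (partner s)` is the coordinate plane complementary to `plane s`.
def partner : Fin 6 → Fin 6 := ![1, 0, 3, 2, 5, 4]

def coordHyperplane (m : Fin 4) (c : ZMod 2) : Finset F16 := {a | a m = c}

def subcube (b : F16) : Finset F16 := {a | ∀ i, b i = 0 → a i = 0}

theorem sum_plane (s : Fin 6) : ∑ a ∈ plane s, a = 0 := by
  revert s; decide

theorem card_plane (s : Fin 6) : #(plane s) = 4 := by
  revert s; decide

theorem sum_coordHyperplane (m : Fin 4) (c : ZMod 2) : ∑ a ∈ coordHyperplane m c, a = 0 := by
  revert m c; decide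

theorem card_coordHyperplane (m : Fin 4) (c : ZMod 2) : #(coordHyperplane m c) = 8 := by
  revert m c; decide

theorem card_plane_inter_plane (s t : Fin 6) :
    #(plane s ∩ plane t) = if s = t then 4 else if t = partner s then 1 else 2 := by
  revert s t; decide

theorem card_plane_inter_plane_partner (s t : Fin 6) :
    (#(plane s ∩ plane (partner t)) : ZMod 2) = (Pi.single s 1 : Fin 6 → ZMod 2) t := by
  revert s t; decide

theorem partner_partner (s : Fin 6) : partner (partner s) = s := by
  revert s; decide

theorem partner_ne_self (s : Fin 6) : partner s ≠ s := by
  revert s; decide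

theorem hammingNorm_lt_of_mem_subcube {a b : F16} (ha : a ∈ subcube b) (hab : a ≠ b) :
    hammingNorm a < hammingNorm b := by
  revert a b; decide

theorem subcube_cases (b : F16) :
    subcube b = {0} ∨ (∃ i, subcube b = {0, Pi.single i 1}) ∨ (∃ s, subcube b = plane s) ∨
      (∃ m, subcube b = coordHyperplane m 0) ∨ subcube b = univ := by
  revert b; decide

theorem univ_eq_coordHyperplane_union :
    (univ : Finset F16) = coordHyperplane 0 0 ∪ coordHyperplane 0 1 := by
  decide

theorem disjoint_coordHyperplane : Disjoint (coordHyperplane 0 0) (coordHyperplane 0 1) := by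
  decide

theorem exists_affine_of_sum_eq_zero {w : F16 → ZMod 2} (hP : ∀ s, ∑ a ∈ plane s, w a = 0)
    (hH : ∀ m c, ∑ a ∈ coordHyperplane m c, w a = 0) :
    ∃ (φ : F16 →ₗ[ZMod 2] ZMod 2) (c : ZMod 2), ∀ a, w a = φ a + c := by
  set φ := Fintype.linearCombination (ZMod 2) fun i => w (Pi.single i 1) - w 0
  refine ⟨φ, w 0, fun a => sub_eq_zero.1 ?_⟩
  set u := fun a => w a - (φ a + w 0)
  have hsub : ∀ D : Finset F16, ∑ a ∈ D, a = 0 → Even #D → ∑ a ∈ D, w a = 0 →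
      ∑ a ∈ D, u a = 0 := fun D hsum hcard hw => by
    simp only [u, sum_sub_distrib, hw, sum_linear_add_const_eq_zero hsum hcard, sub_zero]
  have hHu : ∀ m c, ∑ a ∈ coordHyperplane m c, u a = 0 := fun m c =>
    hsub _ (sum_coordHyperplane m c) (by rw [card_coordHyperplane]; exact ⟨4, rfl⟩) (hH m c)
  refine eq_zero_of_forall_sum_eq_zero (f := u) hammingNorm subcube (by simp [subcube])
    (fun b a => hammingNorm_lt_of_mem_subcube) (fun b => ?_) a
  rcases subcube_cases b with h | ⟨i, h⟩ | ⟨s, h⟩ | ⟨m, h⟩ | h <;> rw [h]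
  · simp [u]
  · rw [sum_pair (Pi.single_ne_zero_iff.2 one_ne_zero).symm]
    simp [u, φ, Fintype.linearCombination_apply_single]
  · exact hsub _ (sum_plane s) (by rw [card_plane]; exact ⟨2, rfl⟩) (hP s)
  · exact hHu m 0
  · rw [univ_eq_coordHyperplane_union, sum_union disjoint_coordHyperplane, hHu, hHu, add_zero]

theorem coordHyperplane_isAffineHyperplane (m : Fin 4) (c : ZMod 2) :
    IsAffineHyperplane (coordHyperplane m c) := by
  refine ⟨LinearMap.proj m, c, fun h => ?_, fun a => by simp [coordHyperplane]⟩
  simpa using LinearMap.congr_fun h (Pi.single m 1)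

theorem halfSum_univ_mem : halfSum univ ∈ KummerLat := by
  rw [halfSum, univ_eq_coordHyperplane_union, sum_union disjoint_coordHyperplane, smul_add]
  exact add_mem (halfSum_mem (coordHyperplane_isAffineHyperplane 0 0))
    (halfSum_mem (coordHyperplane_isAffineHyperplane 0 1))

-- A level set `{φ + c = 1}` is empty, everything, or an affine hyperplane.
theorem halfSum_levelSet_mem (φ : F16 →ₗ[ZMod 2] ZMod 2) (c : ZMod 2) :
    halfSum {a | φ a + c = 1} ∈ KummerLat := by
  by_cases hφ : φ = 0
  · subst hφ
    obtain rfl | rfl : c = 0 ∨ c = 1 := by revert c; decide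
    · simp [halfSum]
    · simpa using halfSum_univ_mem
  · exact halfSum_mem ⟨φ, 1 - c, hφ, fun a => by simp [eq_sub_iff_add_eq]⟩

theorem even_card_inter_plane {H : Finset F16} (hH : IsAffineHyperplane H) (s : Fin 6) :
    Even #(H ∩ plane s) := by
  obtain ⟨φ, c, -, hH⟩ := hH
  have hind : ∀ x c : ZMod 2, (if x = c then 1 else 0) = x + (c + 1) := by decide
  rw [← ZMod.natCast_eq_zero_iff_even, inter_comm, ← filter_mem_eq_inter, natCast_card_filter]
  simp only [hH, hind]
  exact sum_linear_add_const_eq_zero (sum_plane s) (by rw [card_plane]; exact ⟨2, rfl⟩) φ _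

theorem pvec_eq (s : Fin 6) : pvec s = halfSum (plane s) := rfl

theorem pvec_mem_dualLat (s : Fin 6) : pvec s ∈ dualLat BK KummerLat := by
  refine mem_dualLat_KummerLat_iff.2 ⟨fun a => ?_, fun H hH => ?_⟩
  · by_cases ha : a ∈ plane s
    · exact ⟨1, by simp [pvec_eq, halfSum_apply, ha]⟩
    · exact ⟨0, by simp [pvec_eq, halfSum_apply, ha]⟩
  · obtain ⟨k, hk⟩ := even_card_inter_plane hH s
    exact ⟨k, by rw [pvec_eq, sum_halfSum, hk]; push_cast; ring⟩

theorem BK_pvec_pvec (s t : Fin 6) : BK (pvec s) (pvec t) = -(#(plane s ∩ plane t) : ℚ) / 2 := by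
  rw [pvec_eq, pvec_eq, BK_halfSum, sum_halfSum, inter_comm]
  ring

theorem mem_KummerLat_of_two_mul_eq {v : VK} {H : Finset F16} (hH : halfSum H ∈ KummerLat)
    (h : ∀ a, ∃ k : ℤ, 2 * v a = k ∧ (k : ZMod 2) = if a ∈ H then 1 else 0) :
    v ∈ KummerLat := by
  suffices v - halfSum H ∈ KummerLat by simpa using add_mem this hH
  refine mem_KummerLat_of_forall_int fun a => ?_
  obtain ⟨k, hk, hpar⟩ := h a
  set e : ℤ := if a ∈ H then 1 else 0 with he
  obtain ⟨m, hm⟩ : (2 : ℤ) ∣ k - e :=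
    (ZMod.intCast_zmod_eq_zero_iff_dvd _ 2).1 (by push_cast [he, hpar]; exact sub_self _)
  have he' : 2 * halfSum H a = e := by rw [two_mul_halfSum_apply, he]; push_cast; rfl
  have hm' : (k : ℚ) - e = 2 * m := by exact_mod_cast hm
  exact ⟨m, by simp only [Pi.sub_apply]; linarith⟩

def doubledParity : dualLat BK KummerLat →ₗ[ℤ] (F16 → ZMod 2) :=
  LinearMap.pi fun a =>
    (Int.castAddHom (ZMod 2)).toIntLinearMap ∘ₗ dualPairing BK KummerLat (EK_mem a)

theorem doubledParity_apply {v : dualLat BK KummerLat} {a : F16} {k : ℤ}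
    (hk : 2 * (v : VK) a = k) : doubledParity v a = k := by
  have h : dualPairing BK KummerLat (EK_mem a) v = -k := by
    exact_mod_cast (show (dualPairing BK KummerLat (EK_mem a) v : ℚ) = -k by
      rw [intCast_dualPairing, BK_EK, neg_mul, hk])
  simp [doubledParity, h, ZMod.neg_eq_self_mod_two]

theorem exists_doubledParity_eq (v : dualLat BK KummerLat) (a : F16) :
    ∃ k : ℤ, 2 * (v : VK) a = k ∧ doubledParity v a = k := by
  obtain ⟨k, hk⟩ := (mem_dualLat_KummerLat_iff.1 v.2).1 a
  exact ⟨k, hk, doubledParity_apply hk⟩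

theorem sum_doubledParity_eq_zero (v : dualLat BK KummerLat) {S : Finset F16}
    (hS : ∃ k : ℤ, ∑ a ∈ S, (v : VK) a = k) : ∑ a ∈ S, doubledParity v a = 0 := by
  obtain ⟨k, hk⟩ := hS
  choose n hn hpar using exists_doubledParity_eq v
  have hsum : ∑ a ∈ S, n a = 2 * k := by
    exact_mod_cast (show (∑ a ∈ S, n a : ℚ) = 2 * k by
      rw [← hk, mul_sum]
      exact sum_congr rfl fun a _ => (hn a).symm)
  rw [sum_congr rfl fun a _ => hpar a, ← Int.cast_sum, hsum]
  exact (ZMod.intCast_zmod_eq_zero_iff_dvd _ 2).2 ⟨k, rfl⟩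

def discMap : dualLat BK KummerLat →ₗ[ℤ] (Fin 6 → ZMod 2) where
  toFun v t := ∑ a ∈ plane (partner t), doubledParity v a
  map_add' v w := by
    ext t
    simp [sum_add_distrib]
  map_smul' n v := by
    ext t
    simp [mul_sum]

theorem discMap_pvec (s : Fin 6) : discMap ⟨pvec s, pvec_mem_dualLat s⟩ = Pi.single s 1 := by
  have hpar : ∀ a, doubledParity ⟨pvec s, pvec_mem_dualLat s⟩ a = if a ∈ plane s then 1 else 0 :=
    fun a => by
      rw [doubledParity_apply (k := if a ∈ plane s then 1 else 0)
        (by show 2 * pvec s a = _; rw [pvec_eq, two_mul_halfSum_apply]; push_cast; rfl)]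
      push_cast; rfl
  ext t
  simp only [discMap, LinearMap.coe_mk, AddHom.coe_mk, hpar, sum_boole, filter_mem_eq_inter,
    inter_comm, card_plane_inter_plane_partner]

theorem discMap_surjective : Function.Surjective discMap := by
  intro g
  refine ⟨∑ s, (g s).val • ⟨pvec s, pvec_mem_dualLat s⟩, ?_⟩
  simp only [map_sum, map_nsmul, discMap_pvec]
  conv_rhs => rw [← univ_sum_single g]
  refine sum_congr rfl fun s _ => ?_
  rw [← Pi.single_smul, nsmul_eq_mul, mul_one, ZMod.natCast_zmod_val]

theorem ker_discMap :
    LinearMap.ker discMap = comap (dualLat BK KummerLat).subtype KummerLat := by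
  ext v
  simp only [LinearMap.mem_ker, mem_comap, subtype_apply]
  constructor
  · intro hv
    have hP : ∀ s, ∑ a ∈ plane s, doubledParity v a = 0 := fun s => by
      simpa [discMap, partner_partner] using congr_fun hv (partner s)
    have hH : ∀ m c, ∑ a ∈ coordHyperplane m c, doubledParity v a = 0 := fun m c =>
      sum_doubledParity_eq_zero v
        ((mem_dualLat_KummerLat_iff.1 v.2).2 _ (coordHyperplane_isAffineHyperplane m c))
    obtain ⟨φ, c, hφ⟩ := exists_affine_of_sum_eq_zero hP hH
    have hind : ∀ x : ZMod 2, x = if x = 1 then 1 else 0 := by decide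
    refine mem_KummerLat_of_two_mul_eq (halfSum_levelSet_mem φ c) fun a => ?_
    obtain ⟨k, hk, hpar⟩ := exists_doubledParity_eq v a
    exact ⟨k, hk, by rw [← hpar, hφ]; simpa using hind (φ a + c)⟩
  · intro hv
    ext t
    show ∑ a ∈ plane (partner t), doubledParity v a = 0
    refine sum_doubledParity_eq_zero v ?_
    obtain ⟨k, hk⟩ := (pvec_mem_dualLat (partner t)).2 v hv
    rw [BK_comm, pvec_eq, BK_halfSum] at hk
    exact (exists_neg_eq_intCast_iff _).1 ⟨k, hk⟩

noncomputable def discEquiv : Disc BK KummerLat ≃ₗ[ℤ] (Fin 6 → ZMod 2) :=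
  (Submodule.quotEquivOfEq _ _ ker_discMap.symm).trans
    (discMap.quotKerEquivOfSurjective discMap_surjective)

theorem discGram_apply (s t : Fin 6) : discGram s t = if t = partner s then -1 / 2 else 0 := by
  fin_cases s <;> fin_cases t <;> rfl

theorem BK_pvec_pvec_sub_discGram (s t : Fin 6) :
    BK (pvec s) (pvec t) - discGram s t =
      ((if s = t then -2 else if t = partner s then 0 else -1 : ℤ) : ℚ) := by
  rw [BK_pvec_pvec, card_plane_inter_plane, discGram_apply]
  split_ifs with hst hpart
  · exact absurd (hst ▸ hpart) (partner_ne_self t).symm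
  all_goals norm_num

/-- The discriminant group of the Kummer lattice `Π` is isomorphic to `(ℤ/2)⁶`, with
generators represented by the classes of the `p_{ij} = (1/2) Σ_{a ∈ P_{ij}} E_a` for the
six coordinate planes `P_{ij} ⊂ 𝔽₂⁴`, and with respect to these generators the
discriminant (quadratic and bilinear) form is given, modulo `2ℤ` resp. `ℤ`, by minus
three hyperbolic blocks `[[0,1/2],[1/2,0]]`. -/
theorem kummer_disc_group :
    ∃ (h : ∀ s : Fin 6, pvec s ∈ dualLat BK KummerLat)
      (γ : Disc BK KummerLat ≃+ (Fin 6 → ZMod 2)),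
      (∀ s : Fin 6, γ (Submodule.Quotient.mk ⟨pvec s, h s⟩) = Pi.single s 1) ∧
      (∀ s t : Fin 6, ∃ k : ℤ, BK (pvec s) (pvec t) = discGram s t + k) ∧
      (∀ s : Fin 6, ∃ k : ℤ, BK (pvec s) (pvec s) = discGram s s + 2 * k) := by
  refine ⟨pvec_mem_dualLat, discEquiv.toAddEquiv, fun s => discMap_pvec s, fun s t => ?_,
    fun s => ⟨-1, ?_⟩⟩
  · exact ⟨_, sub_eq_iff_eq_add'.1 (BK_pvec_pvec_sub_discGram s t)⟩
  · have h := BK_pvec_pvec_sub_discGram s s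
    rw [if_pos rfl] at h
    push_cast at h ⊢
    linarith
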